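/- Let A be a finite congruence-distributive algebra which is local (i.e., A has exactly one maximal congruence). Then A has the FCLP and the CBLP. -/

import Mathlib

/-! Universal-algebra framework: algebras over a signature, congruences,
factor congruences, lifting properties. -/

structure Signature where
  ops : Type
  arity : ops → ℕ

structure Alg (σ : Signature) where
  carrier : Type
  interp : ∀ f : σ.ops, (Fin (σ.arity f) → carrier) → carrier

namespace Alg

variable {σ : Signature}

/-- A congruence: an equivalence relation compatible with all operations. -/
def IsCon (A : Alg σ) (r : A.carrier → A.carrier → Prop) : Prop :=
  Equivalence r ∧
    ∀ (f : σ.ops) (x y : Fin (σ.arity f) → A.carrier),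
      (∀ i, r (x i) (y i)) → r (A.interp f x) (A.interp f y)

/-- The least congruence `Δ_A`. -/
def delta (A : Alg σ) : A.carrier → A.carrier → Prop := fun a b => a = b

/-- The greatest congruence `∇_A = A²`. -/
def nabla (A : Alg σ) : A.carrier → A.carrier → Prop := fun _ _ => True

/-- Meet (intersection) of congruences. -/
def conMeet (A : Alg σ) (r s : A.carrier → A.carrier → Prop) :
    A.carrier → A.carrier → Prop := fun a b => r a b ∧ s a b

/-- Join of congruences: the least congruence containing both. -/
def conJoin (A : Alg σ) (r s : A.carrier → A.carrier → Prop) :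
    A.carrier → A.carrier → Prop := fun a b =>
  ∀ t, A.IsCon t → (∀ x y, r x y → t x y) → (∀ x y, s x y → t x y) → t a b

/-- The congruence generated by a set of pairs. -/
def conGen (A : Alg σ) (X : Set (A.carrier × A.carrier)) :
    A.carrier → A.carrier → Prop := fun a b =>
  ∀ t, A.IsCon t → (∀ p ∈ X, t p.1 p.2) → t a b

/-- Composition of relations: `(a,b) ∈ comp r s` iff `(a,x) ∈ s` and `(x,b) ∈ r`
for some `x`. -/
def comp (A : Alg σ) (r s : A.carrier → A.carrier → Prop) :
    A.carrier → A.carrier → Prop := fun a b => ∃ x, s a x ∧ r x b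

/-- Factor congruences: congruences `φ` having a congruence `φ*` with
`φ ∨ φ* = ∇`, `φ ∩ φ* = Δ` and `φ ∘ φ* = φ* ∘ φ`. -/
def IsFC (A : Alg σ) (φ : A.carrier → A.carrier → Prop) : Prop :=
  A.IsCon φ ∧ ∃ ψ, A.IsCon ψ ∧ A.conJoin φ ψ = A.nabla ∧
    A.conMeet φ ψ = A.delta ∧ A.comp φ ψ = A.comp ψ φ

/-- Boolean congruences: complemented elements of the lattice `Con(A)`. -/
def IsBooleanCon (A : Alg σ) (φ : A.carrier → A.carrier → Prop) : Prop :=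
  A.IsCon φ ∧ ∃ ψ, A.IsCon ψ ∧ A.conJoin φ ψ = A.nabla ∧ A.conMeet φ ψ = A.delta

/-- `A` is congruence-distributive iff the lattice `Con(A)` is distributive. -/
def CongDistrib (A : Alg σ) : Prop :=
  ∀ r s t, A.IsCon r → A.IsCon s → A.IsCon t →
    A.conMeet r (A.conJoin s t) = A.conJoin (A.conMeet r s) (A.conMeet r t)

/-- `A` is congruence-permutable iff all congruences permute under composition. -/
def CongPermutable (A : Alg σ) : Prop :=
  ∀ r s, A.IsCon r → A.IsCon s → A.comp r s = A.comp s r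

/-- Arithmetical = congruence-distributive + congruence-permutable. -/
def Arithmetical (A : Alg σ) : Prop := A.CongDistrib ∧ A.CongPermutable

/-- The quotient algebra `A/θ`. -/
noncomputable def quotAlg (A : Alg σ) (θ : A.carrier → A.carrier → Prop) :
    Alg σ where
  carrier := Quot θ
  interp f x := Quot.mk θ (A.interp f fun i => (x i).out)

/-- The image `α/θ = {(a/θ, b/θ) : (a,b) ∈ α}` of a relation in the quotient. -/
def quotRel (A : Alg σ) (θ α : A.carrier → A.carrier → Prop) :
    Quot θ → Quot θ → Prop := fun x y =>
  ∃ a b, x = Quot.mk θ a ∧ y = Quot.mk θ b ∧ α a b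

/-- `θ` has the Factor Congruence Lifting Property: the Boolean morphism
`FC(θ) : FC(A) → FC(A/θ)`, `ψ ↦ (ψ ∨ θ)/θ`, is surjective. -/
def HasFCLP (A : Alg σ) (θ : A.carrier → A.carrier → Prop) : Prop :=
  ∀ γ, (A.quotAlg θ).IsFC γ →
    ∃ ψ, A.IsFC ψ ∧ A.quotRel θ (A.conJoin ψ θ) = γ

/-- `θ` has the Congruence Boolean Lifting Property: the Boolean morphism
`B(Con(A)) → B(Con(A/θ))`, `ψ ↦ (ψ ∨ θ)/θ`, is surjective. -/
def HasCBLP (A : Alg σ) (θ : A.carrier → A.carrier → Prop) : Prop :=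
  ∀ γ, (A.quotAlg θ).IsBooleanCon γ →
    ∃ ψ, A.IsBooleanCon ψ ∧ A.quotRel θ (A.conJoin ψ θ) = γ

/-- `A` has FCLP iff every congruence of `A` has FCLP. -/
def AlgFCLP (A : Alg σ) : Prop := ∀ θ, A.IsCon θ → A.HasFCLP θ

/-- `A` has CBLP iff every congruence of `A` has CBLP. -/
def AlgCBLP (A : Alg σ) : Prop := ∀ θ, A.IsCon θ → A.HasCBLP θ

/-- FC-normality. -/
def FCNormal (A : Alg σ) : Prop :=
  ∀ φ ψ, A.IsCon φ → A.IsCon ψ → A.comp φ ψ = A.nabla →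
    ∃ α β, A.IsFC α ∧ A.IsFC β ∧ A.conMeet α β = A.delta ∧
      A.comp φ α = A.nabla ∧ A.comp ψ β = A.nabla

/-- B-normality. -/
def BNormal (A : Alg σ) : Prop :=
  ∀ φ ψ, A.IsCon φ → A.IsCon ψ → A.conJoin φ ψ = A.nabla →
    ∃ α β, A.IsBooleanCon α ∧ A.IsBooleanCon β ∧ A.conMeet α β = A.delta ∧
      A.conJoin φ α = A.nabla ∧ A.conJoin ψ β = A.nabla

/-- Isomorphism of algebras. -/
def Iso (A B : Alg σ) : Prop :=
  ∃ e : A.carrier ≃ B.carrier,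
    ∀ (f : σ.ops) (x : Fin (σ.arity f) → A.carrier),
      e (A.interp f x) = B.interp f fun i => e (x i)

/-- Direct product of a finite family of algebras. -/
def prodAlg {n : ℕ} (B : Fin n → Alg σ) : Alg σ where
  carrier := ∀ i, (B i).carrier
  interp f x := fun i => (B i).interp f fun j => x j i

/-- The product congruence `θ₁ × … × θₙ`. -/
def prodRel {n : ℕ} (B : Fin n → Alg σ)
    (θ : ∀ i, (B i).carrier → (B i).carrier → Prop) :
    (prodAlg B).carrier → (prodAlg B).carrier → Prop :=
  fun x y => ∀ i, θ i (x i) (y i)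

/-- Maximal congruences: maximal elements of `(Con(A) \ {∇}, ⊆)`. -/
def IsMaxCon (A : Alg σ) (θ : A.carrier → A.carrier → Prop) : Prop :=
  A.IsCon θ ∧ θ ≠ A.nabla ∧
    ∀ ψ, A.IsCon ψ → ψ ≠ A.nabla → (∀ a b, θ a b → ψ a b) → ψ = θ

/-- Prime congruences. -/
def IsPrimeCon (A : Alg σ) (θ : A.carrier → A.carrier → Prop) : Prop :=
  A.IsCon θ ∧ ∀ α β, A.IsCon α → A.IsCon β →
    (∀ a b, α a b → β a b → θ a b) →
    (∀ a b, α a b → θ a b) ∨ ∀ a b, β a b → θ a b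

end Alg

/-! A congruence `ρ` of `A/θ` pulls back to the congruence `ρ on Quot.mk θ` of `A`, and two
congruences of `A/θ` joining to `∇` pull back to congruences joining to `∇_A`. In a finite algebra
every proper congruence lies below a maximal one; when `A` is local, two proper congruences therefore
lie below the same maximal congruence and cannot join to `∇_A`. So every complemented congruence of
every quotient `A/θ` is `Δ` or `∇`, the images of the factor congruences `Δ_A` and `∇_A`. -/

namespace Alg

open Function

variable {σ : Signature} {A : Alg σ}

section Trivial

variable (A)

lemma isCon_delta : A.IsCon A.delta := by
  refine ⟨⟨fun _ => rfl, Eq.symm, Eq.trans⟩, fun f x y h => ?_⟩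
  exact congrArg (A.interp f) (funext h)

lemma isCon_nabla : A.IsCon A.nabla :=
  ⟨⟨fun _ => trivial, fun _ => trivial, fun _ _ => trivial⟩, fun _ _ _ _ => trivial⟩

lemma conJoin_nabla_left (s : A.carrier → A.carrier → Prop) :
    A.conJoin A.nabla s = A.nabla :=
  funext₂ fun a b => propext ⟨fun _ => trivial, fun _ _ _ hr _ => hr a b trivial⟩

lemma conJoin_nabla_right (r : A.carrier → A.carrier → Prop) :
    A.conJoin r A.nabla = A.nabla :=
  funext₂ fun a b => propext ⟨fun _ => trivial, fun _ _ _ _ hs => hs a b trivial⟩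

lemma isFC_delta : A.IsFC A.delta := by
  refine ⟨A.isCon_delta, A.nabla, A.isCon_nabla, A.conJoin_nabla_right _, ?_, ?_⟩
  · exact funext₂ fun a b => propext ⟨And.left, fun h => ⟨h, trivial⟩⟩
  · exact funext₂ fun a b => propext ⟨fun _ => ⟨a, rfl, trivial⟩, fun _ => ⟨b, trivial, rfl⟩⟩

lemma isFC_nabla : A.IsFC A.nabla := by
  refine ⟨A.isCon_nabla, A.delta, A.isCon_delta, A.conJoin_nabla_left _, ?_, ?_⟩
  · exact funext₂ fun a b => propext ⟨And.right, fun h => ⟨trivial, h⟩⟩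
  · exact funext₂ fun a b => propext ⟨fun _ => ⟨b, trivial, rfl⟩, fun _ => ⟨a, rfl, trivial⟩⟩

end Trivial

lemma IsFC.isBooleanCon {φ : A.carrier → A.carrier → Prop} (h : A.IsFC φ) :
    A.IsBooleanCon φ :=
  let ⟨hφ, ψ, hψ, hjoin, hmeet, _⟩ := h
  ⟨hφ, ψ, hψ, hjoin, hmeet⟩

lemma conJoin_delta_left {s : A.carrier → A.carrier → Prop} (hs : A.IsCon s) :
    A.conJoin A.delta s = s :=
  funext₂ fun a b => propext
    ⟨fun h => h s hs (fun x _ hxy => hxy ▸ hs.1.refl x) fun _ _ => id,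
      fun h _ _ _ hst => hst a b h⟩

lemma conJoin_le {r s t : A.carrier → A.carrier → Prop} (ht : A.IsCon t) (hr : r ≤ t)
    (hs : s ≤ t) : A.conJoin r s ≤ t :=
  fun _ _ h => h t ht hr hs

lemma exists_isMaxCon_ge [Finite A.carrier] {ψ : A.carrier → A.carrier → Prop}
    (hψ : A.IsCon ψ) (hψ_ne : ψ ≠ A.nabla) : ∃ μ, A.IsMaxCon μ ∧ ψ ≤ μ := by
  obtain ⟨μ, hψμ, hμ⟩ :=
    Finite.exists_le_maximal (p := fun t => A.IsCon t ∧ t ≠ A.nabla) ⟨hψ, hψ_ne⟩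
  refine ⟨μ, ⟨hμ.prop.1, hμ.prop.2, fun χ hχ hχ_ne hμχ => ?_⟩, hψμ⟩
  exact le_antisymm (hμ.2 ⟨hχ, hχ_ne⟩ hμχ) hμχ

lemma eq_nabla_or_eq_nabla_of_conJoin_eq_nabla [Finite A.carrier] (hloc : ∃! μ, A.IsMaxCon μ)
    {α β : A.carrier → A.carrier → Prop} (hα : A.IsCon α) (hβ : A.IsCon β)
    (hjoin : A.conJoin α β = A.nabla) : α = A.nabla ∨ β = A.nabla := by
  by_contra! hne
  obtain ⟨μα, hμα, hαμ⟩ := exists_isMaxCon_ge hα hne.1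
  obtain ⟨μβ, hμβ, hβμ⟩ := exists_isMaxCon_ge hβ hne.2
  obtain rfl : μβ = μα := hloc.unique hμβ hμα
  refine hμα.2.1 (le_antisymm (fun _ _ _ => trivial) ?_)
  exact hjoin ▸ conJoin_le hμα.1 hαμ hβμ

section Quotient

variable {θ : A.carrier → A.carrier → Prop}

lemma mk_interp (hθ : A.IsCon θ) (f : σ.ops) (x : Fin (σ.arity f) → A.carrier) :
    Quot.mk θ (A.interp f x) = (A.quotAlg θ).interp f fun i => Quot.mk θ (x i) := by
  refine Quot.sound (hθ.2 f _ _ fun i => ?_)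
  exact (hθ.1.quot_mk_eq_iff _ _).1 (Quot.out_eq (Quot.mk θ (x i))).symm

lemma IsCon.onFun_mk (hθ : A.IsCon θ) {ρ : Quot θ → Quot θ → Prop}
    (hρ : (A.quotAlg θ).IsCon ρ) : A.IsCon (ρ on Quot.mk θ) := by
  refine ⟨⟨fun _ => hρ.1.refl _, hρ.1.symm, hρ.1.trans⟩, fun f x y hxy => ?_⟩
  change ρ (Quot.mk θ _) (Quot.mk θ _)
  rw [mk_interp hθ, mk_interp hθ]
  exact hρ.2 f _ _ hxy

lemma le_onFun_mk {ρ : Quot θ → Quot θ → Prop} (hρ : (A.quotAlg θ).IsCon ρ) :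
    θ ≤ (ρ on Quot.mk θ) :=
  fun a b h => by
    change ρ (Quot.mk θ a) (Quot.mk θ b)
    rw [Quot.sound h]
    exact hρ.1.refl _

lemma rel_of_mk_eq_mk {t : A.carrier → A.carrier → Prop} (ht : Equivalence t) (hθt : θ ≤ t)
    {a b : A.carrier} (h : Quot.mk θ a = Quot.mk θ b) : t a b :=
  ht.eqvGen_iff.1 (Relation.EqvGen.mono hθt _ _ (Quot.eqvGen_exact h))

lemma quotRel_mk_mk_iff {t : A.carrier → A.carrier → Prop} (ht : Equivalence t) (hθt : θ ≤ t)
    {a b : A.carrier} : A.quotRel θ t (Quot.mk θ a) (Quot.mk θ b) ↔ t a b := by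
  refine ⟨fun ⟨a', b', ha, hb, h⟩ => ?_, fun h => ⟨a, b, rfl, rfl, h⟩⟩
  exact ht.trans (rel_of_mk_eq_mk ht hθt ha) (ht.trans h (rel_of_mk_eq_mk ht hθt hb.symm))

lemma isCon_quotRel {t : A.carrier → A.carrier → Prop} (ht : A.IsCon t) (hθt : θ ≤ t) :
    (A.quotAlg θ).IsCon (A.quotRel θ t) := by
  have hmk := fun {a b} => quotRel_mk_mk_iff (A := A) ht.1 hθt (a := a) (b := b)
  refine ⟨⟨?_, ?_, ?_⟩, fun f x y hxy => ?_⟩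
  · rintro ⟨a⟩
    exact hmk.2 (ht.1.refl a)
  · rintro ⟨a⟩ ⟨b⟩ h
    exact hmk.2 (ht.1.symm (hmk.1 h))
  · rintro ⟨a⟩ ⟨b⟩ ⟨c⟩ hab hbc
    exact hmk.2 (ht.1.trans (hmk.1 hab) (hmk.1 hbc))
  · have hout : ∀ q : (A.quotAlg θ).carrier, Quot.mk θ q.out = q := Quot.out_eq
    refine hmk.2 (ht.2 f (fun i => (x i).out) (fun i => (y i).out) fun i => hmk.1 ?_)
    rw [hout (x i), hout (y i)]
    exact hxy i

lemma conJoin_onFun_mk_eq_nabla {γ δ : Quot θ → Quot θ → Prop} (hγ : (A.quotAlg θ).IsCon γ)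
    (hjoin : (A.quotAlg θ).conJoin γ δ = (A.quotAlg θ).nabla) :
    A.conJoin (γ on Quot.mk θ) (δ on Quot.mk θ) = A.nabla := by
  refine funext₂ fun a b => propext ⟨fun _ => trivial, fun _ t ht hγt hδt => ?_⟩
  have hθt : θ ≤ t := (le_onFun_mk hγ).trans hγt
  have hmk := fun {a b} => quotRel_mk_mk_iff (A := A) ht.1 hθt (a := a) (b := b)
  have hγt' : γ ≤ A.quotRel θ t := by
    rintro ⟨x⟩ ⟨y⟩ h
    exact hmk.2 (hγt x y h)
  have hδt' : δ ≤ A.quotRel θ t := by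
    rintro ⟨x⟩ ⟨y⟩ h
    exact hmk.2 (hδt x y h)
  refine hmk.1 (conJoin_le (isCon_quotRel ht hθt) hγt' hδt' _ _ ?_)
  rw [hjoin]
  trivial

lemma eq_nabla_of_onFun_mk_eq_nabla {ρ : Quot θ → Quot θ → Prop}
    (h : (ρ on Quot.mk θ) = A.nabla) : ρ = (A.quotAlg θ).nabla := by
  ext ⟨a⟩ ⟨b⟩
  exact iff_of_true ((congrFun₂ h a b).mpr trivial) trivial

lemma eq_delta_or_eq_nabla_of_isCompl [Finite A.carrier] (hloc : ∃! μ, A.IsMaxCon μ)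
    (hθ : A.IsCon θ) {γ δ : Quot θ → Quot θ → Prop}
    (hγ : (A.quotAlg θ).IsCon γ) (hδ : (A.quotAlg θ).IsCon δ)
    (hjoin : (A.quotAlg θ).conJoin γ δ = (A.quotAlg θ).nabla)
    (hmeet : (A.quotAlg θ).conMeet γ δ = (A.quotAlg θ).delta) :
    γ = (A.quotAlg θ).delta ∨ γ = (A.quotAlg θ).nabla := by
  rcases eq_nabla_or_eq_nabla_of_conJoin_eq_nabla hloc (hθ.onFun_mk hγ) (hθ.onFun_mk hδ)
    (conJoin_onFun_mk_eq_nabla hγ hjoin) with h | h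
  · exact .inr (eq_nabla_of_onFun_mk_eq_nabla h)
  · rw [← hmeet, eq_nabla_of_onFun_mk_eq_nabla h]
    exact .inl (funext₂ fun _ _ => (and_true _).symm)

lemma quotRel_self (hθ : A.IsCon θ) : A.quotRel θ θ = (A.quotAlg θ).delta := by
  ext ⟨a⟩ ⟨b⟩
  exact (quotRel_mk_mk_iff hθ.1 le_rfl).trans (hθ.1.quot_mk_eq_iff a b).symm

lemma quotRel_nabla : A.quotRel θ A.nabla = (A.quotAlg θ).nabla := by
  ext ⟨a⟩ ⟨b⟩
  exact iff_of_true ⟨a, b, rfl, rfl, trivial⟩ trivial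

lemma exists_isFC_lift_of_eq_delta_or_eq_nabla (hθ : A.IsCon θ) {γ : Quot θ → Quot θ → Prop}
    (hγ : γ = (A.quotAlg θ).delta ∨ γ = (A.quotAlg θ).nabla) :
    ∃ ψ, A.IsFC ψ ∧ A.quotRel θ (A.conJoin ψ θ) = γ := by
  rcases hγ with rfl | rfl
  · exact ⟨A.delta, A.isFC_delta, by rw [conJoin_delta_left hθ, quotRel_self hθ]⟩
  · exact ⟨A.nabla, A.isFC_nabla, by rw [conJoin_nabla_left, quotRel_nabla]⟩

end Quotient

end Alg

theorem stmt_18_general {σ : Signature} (A : Alg σ) (hfin : Finite A.carrier)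
    (hloc : ∃! μ, A.IsMaxCon μ) :
    A.AlgFCLP ∧ A.AlgCBLP := by
  refine ⟨fun θ hθ γ ⟨hγ, δ, hδ, hjoin, hmeet, _⟩ => ?_,
    fun θ hθ γ ⟨hγ, δ, hδ, hjoin, hmeet⟩ => ?_⟩
  · exact A.exists_isFC_lift_of_eq_delta_or_eq_nabla hθ
      (Alg.eq_delta_or_eq_nabla_of_isCompl hloc hθ hγ hδ hjoin hmeet)
  · obtain ⟨ψ, hψ, hlift⟩ := A.exists_isFC_lift_of_eq_delta_or_eq_nabla hθ
      (Alg.eq_delta_or_eq_nabla_of_isCompl hloc hθ hγ hδ hjoin hmeet)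
    exact ⟨ψ, hψ.isBooleanCon, hlift⟩

/-- A finite local congruence-distributive algebra has the FCLP and
the CBLP. -/
theorem stmt_18 {σ : Signature} (A : Alg σ) (hne : Nonempty A.carrier)
    (hfin : Finite A.carrier) (hcd : A.CongDistrib)
    (hloc : ∃! μ, A.IsMaxCon μ) :
    A.AlgFCLP ∧ A.AlgCBLP :=
  stmt_18_general A hfin hloc
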